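/- arXiv:2209.08811 — 9 statements merged into one kernel-verified Lean document; each statement's English description precedes it below -/
import Mathlib

section
/- Let u_ρ ∈ V be a solution of the regularized variational problem with target ū ∈ H, and assume the target is regular, i.e., ū = ι w̄ for some w̄ ∈ V. Then the energy seminorm estimate ‖u_ρ − w̄‖_a ≤ ‖w̄‖_a holds. -/
open scoped RealInnerProductSpace

/-!
Testing the variational equation with `e = uρ - w̄` gives `a(uρ, e) = -‖ι e‖² ≤ 0`. Expanding
`a(w̄, w̄) = a(uρ - e, uρ - e) = a(uρ, uρ) - 2 a(uρ, e) + a(e, e)` then shows `a(e, e) ≤ a(w̄, w̄)`.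
-/

lemma LinearMap.BilinForm.apply_sub_sub_le_of_apply_sub_nonpos {R M : Type*}
    [CommRing R] [PartialOrder R] [IsOrderedRing R] [AddCommGroup M] [Module R M]
    (B : LinearMap.BilinForm R M) (hsymm : ∀ x y, B x y = B y x) {u w : M}
    (hu : 0 ≤ B u u) (huw : B u (u - w) ≤ 0) :
    B (u - w) (u - w) ≤ B w w := by
  obtain ⟨e, rfl⟩ : ∃ e, w = u - e := ⟨u - w, (sub_sub_self u w).symm⟩
  rw [sub_sub_cancel] at huw ⊢
  have hexpand : B (u - e) (u - e) = B u u - B u e - B u e + B e e := by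
    simp only [map_sub, LinearMap.sub_apply, hsymm e u]
    ring
  rw [hexpand]
  refine le_add_of_nonneg_left ?_
  rw [sub_sub, sub_nonneg]
  exact (add_nonpos huw huw).trans hu

lemma apply_sub_eq_neg_norm_sq_of_variational {V H : Type*}
    [NormedAddCommGroup V] [InnerProductSpace ℝ V]
    [NormedAddCommGroup H] [InnerProductSpace ℝ H]
    (ι : V →L[ℝ] H) (a : V →L[ℝ] V →L[ℝ] ℝ) {u w : V}
    (hsol : ∀ v : V, a u v + ⟪ι u, ι v⟫ = ⟪ι w, ι v⟫) :
    a u (u - w) = -‖ι (u - w)‖ ^ 2 := by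
  calc a u (u - w) = ⟪ι w, ι (u - w)⟫ - ⟪ι u, ι (u - w)⟫ := by linarith [hsol (u - w)]
    _ = -⟪ι (u - w), ι (u - w)⟫ := by rw [← neg_sub, ← inner_sub_left, ← map_sub]
    _ = -‖ι (u - w)‖ ^ 2 := by rw [real_inner_self_eq_norm_sq]

theorem stmt_1_general
    {V H : Type*}
    [NormedAddCommGroup V] [InnerProductSpace ℝ V]
    [NormedAddCommGroup H] [InnerProductSpace ℝ H]
    (ι : V →L[ℝ] H)
    (a : V →L[ℝ] V →L[ℝ] ℝ)
    (hsym : ∀ u v : V, a u v = a v u)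
    (hpos : ∀ v : V, 0 ≤ a v v)
    (ubar : H) (uρ : V)
    (hsol : ∀ v : V, a uρ v + ⟪ι uρ, ι v⟫ = ⟪ubar, ι v⟫)
    (wbar : V) (hreg : ubar = ι wbar) :
    Real.sqrt (a (uρ - wbar) (uρ - wbar)) ≤ Real.sqrt (a wbar wbar) := by
  subst hreg
  have hnonpos : a uρ (uρ - wbar) ≤ 0 := by
    rw [apply_sub_eq_neg_norm_sq_of_variational ι a hsol]
    exact neg_nonpos.mpr (sq_nonneg _)
  exact Real.sqrt_le_sqrt <| LinearMap.BilinForm.apply_sub_sub_le_of_apply_sub_nonpos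
    (ContinuousLinearMap.toLinearMap₁₂ a) hsym (hpos uρ) hnonpos

/-- If the target is regular, `ū = ι w̄` with `w̄ ∈ V`, then the
solution `uρ` of the regularized variational problem satisfies the energy
seminorm estimate `‖uρ − w̄‖_a ≤ ‖w̄‖_a`, where `‖v‖_a = √(a(v,v))`. -/
theorem stmt_1
    {V H : Type*}
    [NormedAddCommGroup V] [InnerProductSpace ℝ V] [CompleteSpace V]
    [NormedAddCommGroup H] [InnerProductSpace ℝ H] [CompleteSpace H]
    (ι : V →L[ℝ] H) (hι : Function.Injective ι)
    (a : V →L[ℝ] V →L[ℝ] ℝ)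
    (hsym : ∀ u v : V, a u v = a v u)
    (hpos : ∀ v : V, 0 ≤ a v v)
    (ubar : H) (uρ : V)
    (hsol : ∀ v : V, a uρ v + ⟪ι uρ, ι v⟫ = ⟪ubar, ι v⟫)
    (wbar : V) (hreg : ubar = ι wbar) :
    Real.sqrt (a (uρ - wbar) (uρ - wbar)) ≤ Real.sqrt (a wbar wbar) :=
  stmt_1_general ι a hsym hpos ubar uρ hsol wbar hreg
end

section
/- Let u_ρ ∈ V be a solution of the regularized variational problem with target ū ∈ H, and assume ū = ι w̄ for some w̄ ∈ V. Then ‖ι u_ρ − ū‖_H ≤ ‖w̄‖_a, i.e., the L²-type error is bounded by the energy seminorm of the target. -/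
open scoped RealInnerProductSpace

/-! Testing the variational equation with `v = uρ - w̄` gives `‖ι uρ - ι w̄‖² = -a(uρ, uρ - w̄)`.
Expanding `a(w̄, w̄) = a(uρ - (uρ - w̄), uρ - (uρ - w̄))` by symmetry then yields
`a(w̄, w̄) = a(uρ, uρ) + 2 ‖ι uρ - ι w̄‖² + a(uρ - w̄, uρ - w̄) ≥ 2 ‖ι uρ - ι w̄‖²`. -/

section

variable {V : Type*} [AddCommGroup V] [Module ℝ V] [TopologicalSpace V]

theorem ContinuousLinearMap.apply_sub_sub_of_symm (a : V →L[ℝ] V →L[ℝ] ℝ)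
    (hsym : ∀ u v : V, a u v = a v u) (u e : V) :
    a (u - e) (u - e) = a u u - 2 * a u e + a e e := by
  simp only [map_sub, sub_apply, hsym e u]
  ring

variable {H : Type*} [NormedAddCommGroup H] [InnerProductSpace ℝ H]
  (ι : V →L[ℝ] H) (a : V →L[ℝ] V →L[ℝ] ℝ) {u w : V}

theorem inner_residual_eq_neg (hsol : ∀ v : V, a u v + ⟪ι u, ι v⟫ = ⟪ι w, ι v⟫) (v : V) :
    ⟪ι u - ι w, ι v⟫ = -a u v := by
  rw [inner_sub_left]
  linarith [hsol v]

theorem norm_sq_residual_eq (hsol : ∀ v : V, a u v + ⟪ι u, ι v⟫ = ⟪ι w, ι v⟫) :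
    ‖ι u - ι w‖ ^ 2 = -a u (u - w) := by
  rw [← real_inner_self_eq_norm_sq, ← inner_residual_eq_neg ι a hsol, map_sub]

theorem two_mul_norm_sq_residual_le (hsym : ∀ u v : V, a u v = a v u) (hpos : ∀ v : V, 0 ≤ a v v)
    (hsol : ∀ v : V, a u v + ⟪ι u, ι v⟫ = ⟪ι w, ι v⟫) :
    2 * ‖ι u - ι w‖ ^ 2 ≤ a w w := by
  have hw : a w w = a u u - 2 * a u (u - w) + a (u - w) (u - w) := by
    rw [← a.apply_sub_sub_of_symm hsym, sub_sub_cancel]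
  rw [hw, norm_sq_residual_eq ι a hsol]
  linarith [hpos u, hpos (u - w)]

end

theorem stmt_2_general
    {V H : Type*}
    [NormedAddCommGroup V] [InnerProductSpace ℝ V]
    [NormedAddCommGroup H] [InnerProductSpace ℝ H]
    (ι : V →L[ℝ] H)
    (a : V →L[ℝ] V →L[ℝ] ℝ)
    (hsym : ∀ u v : V, a u v = a v u)
    (hpos : ∀ v : V, 0 ≤ a v v)
    (ubar : H) (uρ : V)
    (hsol : ∀ v : V, a uρ v + ⟪ι uρ, ι v⟫ = ⟪ubar, ι v⟫)
    (wbar : V) (hreg : ubar = ι wbar) :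
    ‖ι uρ - ubar‖ ≤ Real.sqrt (a wbar wbar) := by
  subst hreg
  apply Real.le_sqrt_of_sq_le
  linarith [two_mul_norm_sq_residual_le ι a hsym hpos hsol, sq_nonneg ‖ι uρ - ι wbar‖]

/-- If the target is regular, `ū = ι w̄` with `w̄ ∈ V`, then the
solution `uρ` of the regularized variational problem satisfies
`‖ι uρ − ū‖_H ≤ ‖w̄‖_a`, where `‖v‖_a = √(a(v,v))`. -/
theorem stmt_2
    {V H : Type*}
    [NormedAddCommGroup V] [InnerProductSpace ℝ V] [CompleteSpace V]
    [NormedAddCommGroup H] [InnerProductSpace ℝ H] [CompleteSpace H]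
    (ι : V →L[ℝ] H) (hι : Function.Injective ι)
    (a : V →L[ℝ] V →L[ℝ] ℝ)
    (hsym : ∀ u v : V, a u v = a v u)
    (hpos : ∀ v : V, 0 ≤ a v v)
    (ubar : H) (uρ : V)
    (hsol : ∀ v : V, a uρ v + ⟪ι uρ, ι v⟫ = ⟪ubar, ι v⟫)
    (wbar : V) (hreg : ubar = ι wbar) :
    ‖ι uρ - ubar‖ ≤ Real.sqrt (a wbar wbar) :=
  stmt_2_general ι a hsym hpos ubar uρ hsol wbar hreg
end

section
/- Let u_ρ ∈ V be a solution of the regularized variational problem with target ū ∈ H. Assume ū = ι w̄ for some w̄ ∈ V, and that there exists g ∈ H with a(w̄, v) = ⟨g, ι v⟩_H for all v ∈ V (i.e., S_ρ ū ∈ L²(Ω) in the concrete setting). Then ‖ι u_ρ − ū‖_H ≤ ‖g‖_H. -/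
/-!
The error `e = uρ - w̄` satisfies `a(e, v) + ⟪ι e, ι v⟫ = -⟪g, ι v⟫` for all `v`. Testing with
`v = e` and dropping `a(e, e) ≥ 0` gives `‖ι e‖² ≤ -⟪g, ι e⟫ ≤ ‖g‖ ‖ι e‖` by Cauchy–Schwarz.
-/

open scoped RealInnerProductSpace

theorem norm_le_of_inner_self_le_neg_inner {H : Type*} [NormedAddCommGroup H]
    [InnerProductSpace ℝ H] {x g : H} (h : ⟪x, x⟫ ≤ -⟪g, x⟫) : ‖x‖ ≤ ‖g‖ := by
  have hsq : ‖x‖ ^ 2 ≤ ‖g‖ * ‖x‖ :=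
    calc ‖x‖ ^ 2 = ⟪x, x⟫ := (real_inner_self_eq_norm_sq x).symm
      _ ≤ -⟪g, x⟫ := h
      _ ≤ ‖g‖ * ‖x‖ := by linarith [abs_real_inner_le_norm g x, neg_abs_le ⟪g, x⟫]
  nlinarith [norm_nonneg x, norm_nonneg g]

theorem regularized_error_eq {V H : Type*} [NormedAddCommGroup V] [InnerProductSpace ℝ V]
    [NormedAddCommGroup H] [InnerProductSpace ℝ H]
    {ι : V →L[ℝ] H} {a : V →L[ℝ] V →L[ℝ] ℝ} {uρ wbar : V} {g : H}
    (hsol : ∀ v : V, a uρ v + ⟪ι uρ, ι v⟫ = ⟪ι wbar, ι v⟫)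
    (hg : ∀ v : V, a wbar v = ⟪g, ι v⟫) (v : V) :
    a (uρ - wbar) v + ⟪ι (uρ - wbar), ι v⟫ = -⟪g, ι v⟫ := by
  simp only [map_sub, sub_apply, inner_sub_left]
  linarith [hsol v, hg v]

theorem stmt_3_general
    {V H : Type*}
    [NormedAddCommGroup V] [InnerProductSpace ℝ V]
    [NormedAddCommGroup H] [InnerProductSpace ℝ H]
    (ι : V →L[ℝ] H)
    (a : V →L[ℝ] V →L[ℝ] ℝ)
    (hpos : ∀ v : V, 0 ≤ a v v)
    (ubar : H) (uρ : V)
    (hsol : ∀ v : V, a uρ v + ⟪ι uρ, ι v⟫ = ⟪ubar, ι v⟫)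
    (wbar : V) (hreg : ubar = ι wbar)
    (g : H) (hg : ∀ v : V, a wbar v = ⟪g, ι v⟫) :
    ‖ι uρ - ubar‖ ≤ ‖g‖ := by
  subst hreg
  rw [← map_sub]
  apply norm_le_of_inner_self_le_neg_inner
  have herr := regularized_error_eq hsol hg (uρ - wbar)
  linarith [hpos (uρ - wbar)]

/-- If `ū = ι w̄` with `w̄ ∈ V` and there is `g ∈ H` with
`a(w̄, v) = ⟨g, ι v⟩_H` for all `v ∈ V` (i.e. `S_ρ ū ∈ L²(Ω)`), then the
solution `uρ` of the regularized variational problem satisfies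
`‖ι uρ − ū‖_H ≤ ‖g‖_H`. -/
theorem stmt_3
    {V H : Type*}
    [NormedAddCommGroup V] [InnerProductSpace ℝ V] [CompleteSpace V]
    [NormedAddCommGroup H] [InnerProductSpace ℝ H] [CompleteSpace H]
    (ι : V →L[ℝ] H) (hι : Function.Injective ι)
    (a : V →L[ℝ] V →L[ℝ] ℝ)
    (hsym : ∀ u v : V, a u v = a v u)
    (hpos : ∀ v : V, 0 ≤ a v v)
    (ubar : H) (uρ : V)
    (hsol : ∀ v : V, a uρ v + ⟪ι uρ, ι v⟫ = ⟪ubar, ι v⟫)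
    (wbar : V) (hreg : ubar = ι wbar)
    (g : H) (hg : ∀ v : V, a wbar v = ⟪g, ι v⟫) :
    ‖ι uρ - ubar‖ ≤ ‖g‖ :=
  stmt_3_general ι a hpos ubar uρ hsol wbar hreg g hg
end

section
/- Let u_ρ ∈ V be a solution of the regularized variational problem with target ū ∈ H. Assume ū = ι w̄ for some w̄ ∈ V, and that there exists g ∈ H with a(w̄, v) = ⟨g, ι v⟩_H for all v ∈ V. Then the energy seminorm estimate ‖u_ρ − w̄‖_a ≤ ‖g‖_H holds. -/
open scoped RealInnerProductSpace

/-! Testing the two variational equations against the error `e = uρ - w̄` gives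
`a(e, e) = -‖ι e‖² - ⟪g, ι e⟫`, and completing the square bounds the right-hand side by
`‖g‖² / 4`. -/

theorem neg_norm_sq_sub_inner_le {H : Type*} [NormedAddCommGroup H] [InnerProductSpace ℝ H]
    (g x : H) : -‖x‖ ^ 2 - ⟪g, x⟫ ≤ ‖g‖ ^ 2 / 4 := by
  have hsq : ‖x + (1 / 2 : ℝ) • g‖ ^ 2 = ‖x‖ ^ 2 + ⟪g, x⟫ + ‖g‖ ^ 2 / 4 := by
    rw [norm_add_sq_real, norm_smul, inner_smul_right, real_inner_comm, Real.norm_eq_abs,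
      abs_of_pos (by norm_num : (0 : ℝ) < 1 / 2)]
    ring
  nlinarith [sq_nonneg ‖x + (1 / 2 : ℝ) • g‖]

section Variational

variable {V H : Type*} [NormedAddCommGroup V] [NormedSpace ℝ V]
  [NormedAddCommGroup H] [InnerProductSpace ℝ H]

theorem apply_sub_self_eq_of_variational {ι : V →L[ℝ] H} {a : V →L[ℝ] V →L[ℝ] ℝ}
    {u w : V} {g : H} (hsol : ∀ v, a u v + ⟪ι u, ι v⟫ = ⟪ι w, ι v⟫)
    (hg : ∀ v, a w v = ⟪g, ι v⟫) :
    a (u - w) (u - w) = -‖ι (u - w)‖ ^ 2 - ⟪g, ι (u - w)⟫ := by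
  calc a (u - w) (u - w) = a u (u - w) - a w (u - w) :=
        a.map_sub₂ u w (u - w)
    _ = -⟪ι (u - w), ι (u - w)⟫ - ⟪g, ι (u - w)⟫ := by
        have hu := hsol (u - w)
        rw [hg, map_sub ι u w, inner_sub_left] at *
        linarith
    _ = -‖ι (u - w)‖ ^ 2 - ⟪g, ι (u - w)⟫ := by rw [real_inner_self_eq_norm_sq]

theorem apply_sub_self_le_of_variational {ι : V →L[ℝ] H} {a : V →L[ℝ] V →L[ℝ] ℝ}
    {u w : V} {g : H} (hsol : ∀ v, a u v + ⟪ι u, ι v⟫ = ⟪ι w, ι v⟫)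
    (hg : ∀ v, a w v = ⟪g, ι v⟫) :
    a (u - w) (u - w) ≤ ‖g‖ ^ 2 / 4 :=
  (apply_sub_self_eq_of_variational hsol hg).trans_le (neg_norm_sq_sub_inner_le _ _)

end Variational

theorem stmt_4_general
    {V H : Type*}
    [NormedAddCommGroup V] [InnerProductSpace ℝ V]
    [NormedAddCommGroup H] [InnerProductSpace ℝ H]
    (ι : V →L[ℝ] H)
    (a : V →L[ℝ] V →L[ℝ] ℝ)
    (ubar : H) (uρ : V)
    (hsol : ∀ v : V, a uρ v + ⟪ι uρ, ι v⟫ = ⟪ubar, ι v⟫)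
    (wbar : V) (hreg : ubar = ι wbar)
    (g : H) (hg : ∀ v : V, a wbar v = ⟪g, ι v⟫) :
    Real.sqrt (a (uρ - wbar) (uρ - wbar)) ≤ ‖g‖ := by
  subst hreg
  refine Real.sqrt_le_iff.mpr ⟨norm_nonneg g, ?_⟩
  calc a (uρ - wbar) (uρ - wbar) ≤ ‖g‖ ^ 2 / 4 := apply_sub_self_le_of_variational hsol hg
    _ ≤ ‖g‖ ^ 2 := by linarith [sq_nonneg ‖g‖]

/-- If `ū = ι w̄` with `w̄ ∈ V` and there is `g ∈ H` with
`a(w̄, v) = ⟨g, ι v⟩_H` for all `v ∈ V`, then the solution `uρ` of the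
regularized variational problem satisfies the energy seminorm estimate
`‖uρ − w̄‖_a ≤ ‖g‖_H`, where `‖v‖_a = √(a(v,v))`. -/
theorem stmt_4
    {V H : Type*}
    [NormedAddCommGroup V] [InnerProductSpace ℝ V] [CompleteSpace V]
    [NormedAddCommGroup H] [InnerProductSpace ℝ H] [CompleteSpace H]
    (ι : V →L[ℝ] H) (hι : Function.Injective ι)
    (a : V →L[ℝ] V →L[ℝ] ℝ)
    (hsym : ∀ u v : V, a u v = a v u)
    (hpos : ∀ v : V, 0 ≤ a v v)
    (ubar : H) (uρ : V)
    (hsol : ∀ v : V, a uρ v + ⟪ι uρ, ι v⟫ = ⟪ubar, ι v⟫)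
    (wbar : V) (hreg : ubar = ι wbar)
    (g : H) (hg : ∀ v : V, a wbar v = ⟪g, ι v⟫) :
    Real.sqrt (a (uρ - wbar) (uρ - wbar)) ≤ ‖g‖ :=
  stmt_4_general ι a ubar uρ hsol wbar hreg g hg
end

section
/- Let u_ρ ∈ V be a solution of the regularized variational problem with target ū ∈ H, let V_h ⊆ V be a closed subspace, and let u_{ρh} ∈ V_h be a Galerkin solution. Assume ū = ι w̄ for some w̄ ∈ V. Then for every v_h ∈ V_h: ‖ι(u_ρ − u_{ρh})‖_H² ≤ 2 [ ‖u_ρ − w̄‖_a² + ‖ι u_ρ − ū‖_H² + ‖w̄ − v_h‖_a² + ‖ι(w̄ − v_h)‖_H² ]. -/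
open scoped RealInnerProductSpace

/-!
Both `u_ρ` and `u_{ρh}` solve the problem for the form `b(u, v) = a(u, v) + ⟨ι u, ι v⟩`, which is
symmetric and positive semidefinite, so `e = u_ρ - u_{ρh}` is `b`-orthogonal to `V_h`. Hence
`‖ι e‖² ≤ b(e, e) ≤ b(e + z, e + z)` for every `z ∈ V_h`; taking `z = u_{ρh} - v_h` gives
`e + z = (u_ρ - w̄) + (w̄ - v_h)`, and `b(p + q, p + q) ≤ 2 (b(p, p) + b(q, q))` splits the bound.
-/

namespace LinearMap.IsPosSemidef

section CommSemiring

variable {R M M' : Type*} [CommSemiring R] [LE R]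
  [AddCommMonoid M] [Module R M] [AddCommMonoid M'] [Module R M'] {B : M →ₗ[R] M →ₗ[R] R}

lemma compl₁₂ (hB : B.IsPosSemidef) (f : M' →ₗ[R] M) : (B.compl₁₂ f f).IsPosSemidef where
  eq x y := hB.eq (f x) (f y)
  nonneg x := hB.nonneg (f x)

end CommSemiring

variable {R M : Type*} [CommRing R] [PartialOrder R] [IsOrderedRing R]
  [AddCommGroup M] [Module R M] {B : M →ₗ[R] M →ₗ[R] R}

lemma apply_add_self_le (hB : B.IsPosSemidef) (x y : M) :
    B (x + y) (x + y) ≤ 2 * (B x x + B y y) := by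
  have hsub := hB.nonneg (x - y)
  have hsymm : B y x = B x y := (hB.eq x y).symm
  simp only [map_add, map_sub, add_apply, sub_apply] at hsub ⊢
  linear_combination hsub

lemma apply_self_le_of_apply_eq_zero (hB : B.IsPosSemidef) {x y : M} (hxy : B x y = 0) :
    B x x ≤ B (x + y) (x + y) := by
  have hyx : B y x = 0 := hB.isSymm.eq_iff.mp hxy
  simp only [map_add, add_apply, hxy, hyx, add_zero, le_add_iff_nonneg_right]
  exact hB.nonneg y

end LinearMap.IsPosSemidef

theorem stmt_7_general
    {V H : Type*}
    [NormedAddCommGroup V] [InnerProductSpace ℝ V]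
    [NormedAddCommGroup H] [InnerProductSpace ℝ H]
    (ι : V →L[ℝ] H)
    (a : V →L[ℝ] V →L[ℝ] ℝ)
    (hsym : ∀ u v : V, a u v = a v u)
    (hpos : ∀ v : V, 0 ≤ a v v)
    (ubar : H) (uρ : V)
    (hsol : ∀ v : V, a uρ v + ⟪ι uρ, ι v⟫ = ⟪ubar, ι v⟫)
    (Vh : Submodule ℝ V)
    (uρh : V) (huρh : uρh ∈ Vh)
    (hGal : ∀ vh ∈ Vh, a uρh vh + ⟪ι uρh, ι vh⟫ = ⟪ubar, ι vh⟫)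
    (wbar : V) (hreg : ubar = ι wbar) :
    ∀ vh ∈ Vh,
      ‖ι (uρ - uρh)‖ ^ 2 ≤
        2 * (a (uρ - wbar) (uρ - wbar) + ‖ι uρ - ubar‖ ^ 2 +
          a (wbar - vh) (wbar - vh) + ‖ι (wbar - vh)‖ ^ 2) := by
  intro vh hvh
  set b := ContinuousLinearMap.toLinearMap₁₂ a + (innerₗ H).compl₁₂ (ι : V →ₗ[ℝ] H) ι
  have hb : ∀ u v, b u v = a u v + ⟪ι u, ι v⟫ := fun _ _ => rfl
  have hbpsd : b.IsPosSemidef :=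
    .add ⟨⟨fun u v => hsym u v⟩, ⟨hpos⟩⟩ (isPosSemidef_inner.compl₁₂ _)
  have horth : b (uρ - uρh) (uρh - vh) = 0 := by
    rw [map_sub b, LinearMap.sub_apply, hb, hb, hsol, hGal _ (Vh.sub_mem huρh hvh), sub_self]
  calc ‖ι (uρ - uρh)‖ ^ 2
      ≤ b (uρ - uρh) (uρ - uρh) := by
        rw [hb, real_inner_self_eq_norm_sq]
        exact le_add_of_nonneg_left (hpos _)
    _ ≤ b (uρ - uρh + (uρh - vh)) (uρ - uρh + (uρh - vh)) :=
        hbpsd.apply_self_le_of_apply_eq_zero horth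
    _ = b (uρ - wbar + (wbar - vh)) (uρ - wbar + (wbar - vh)) := by
        simp only [sub_add_sub_cancel]
    _ ≤ 2 * (b (uρ - wbar) (uρ - wbar) + b (wbar - vh) (wbar - vh)) :=
        hbpsd.apply_add_self_le _ _
    _ = _ := by
        rw [hb, hb, real_inner_self_eq_norm_sq, real_inner_self_eq_norm_sq, hreg, ← map_sub]
        ring

/-- for the continuous solution `uρ`, a Galerkin solution
`uρh ∈ V_h`, and a regular target `ū = ι w̄`, for every `v_h ∈ V_h`:
`‖ι(uρ − uρh)‖² ≤ 2[‖uρ − w̄‖_a² + ‖ι uρ − ū‖² + ‖w̄ − v_h‖_a² + ‖ι(w̄ − v_h)‖²]`. -/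
theorem stmt_7
    {V H : Type*}
    [NormedAddCommGroup V] [InnerProductSpace ℝ V] [CompleteSpace V]
    [NormedAddCommGroup H] [InnerProductSpace ℝ H] [CompleteSpace H]
    (ι : V →L[ℝ] H) (hι : Function.Injective ι)
    (a : V →L[ℝ] V →L[ℝ] ℝ)
    (hsym : ∀ u v : V, a u v = a v u)
    (hpos : ∀ v : V, 0 ≤ a v v)
    (ubar : H) (uρ : V)
    (hsol : ∀ v : V, a uρ v + ⟪ι uρ, ι v⟫ = ⟪ubar, ι v⟫)
    (Vh : Submodule ℝ V) (hVh : IsClosed (Vh : Set V))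
    (uρh : V) (huρh : uρh ∈ Vh)
    (hGal : ∀ vh ∈ Vh, a uρh vh + ⟪ι uρh, ι vh⟫ = ⟪ubar, ι vh⟫)
    (wbar : V) (hreg : ubar = ι wbar) :
    ∀ vh ∈ Vh,
      ‖ι (uρ - uρh)‖ ^ 2 ≤
        2 * (a (uρ - wbar) (uρ - wbar) + ‖ι uρ - ubar‖ ^ 2 +
          a (wbar - vh) (wbar - vh) + ‖ι (wbar - vh)‖ ^ 2) :=
  stmt_7_general ι a hsym hpos ubar uρ hsol Vh uρh huρh hGal wbar hreg
end

section
/- Let u_ρ ∈ V be a solution of the regularized variational problem with target ū ∈ H, let V_h ⊆ V be a closed subspace, and let u_{ρh} ∈ V_h be a Galerkin solution. Assume ū = ι w̄ for some w̄ ∈ V. Then the Galerkin error satisfies, for every v_h ∈ V_h: ‖ι(u_ρ − u_{ρh})‖_H² ≤ 2 [ 2‖w̄‖_a² + ‖w̄ − v_h‖_a² + ‖ι(w̄ − v_h)‖_H² ]. -/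
/-!
Write `B = a + ⟪ι ·, ι ·⟫`, a symmetric positive semidefinite form. Galerkin orthogonality makes
`uρh` the `B`-orthogonal projection of `uρ` onto `V_h`, so `‖ι(uρ - uρh)‖² ≤ B(uρ - v_h, uρ - v_h)`
for every `v_h ∈ V_h` (Céa). Splitting `uρ - v_h = (uρ - w̄) + (w̄ - v_h)` leaves
`B(uρ - w̄, uρ - w̄)`, which is at most `‖w̄‖_a²` because testing the equation for `uρ` with
`uρ - w̄` gives `B(uρ - w̄, uρ - w̄) = -a(w̄, uρ - w̄)`.
-/

open scoped RealInnerProductSpace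

namespace LinearMap.IsPosSemidef

lemma compl₁₂_self {R M N : Type*} [CommSemiring R] [LE R] [AddCommMonoid M] [Module R M]
    [AddCommMonoid N] [Module R N] {B : M →ₗ[R] M →ₗ[R] R} (hB : B.IsPosSemidef)
    (f : N →ₗ[R] M) : (B.compl₁₂ f f).IsPosSemidef where
  eq x y := hB.eq (f x) (f y)
  nonneg x := hB.nonneg (f x)

variable {R M : Type*} [CommRing R] [LinearOrder R] [IsStrictOrderedRing R]
  [AddCommGroup M] [Module R M] {B : M →ₗ[R] M →ₗ[R] R}

lemma two_mul_apply_le (hB : B.IsPosSemidef) (x y : M) : 2 * B x y ≤ B x x + B y y := by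
  have h := hB.nonneg (x - y)
  have hyx : B y x = B x y := (hB.eq x y).symm
  simp only [map_sub, LinearMap.sub_apply] at h
  linarith

lemma apply_add_le (hB : B.IsPosSemidef) (x y : M) :
    B (x + y) (x + y) ≤ 2 * B x x + 2 * B y y := by
  have hyx : B y x = B x y := (hB.eq x y).symm
  have := hB.two_mul_apply_le x y
  simp only [map_add, LinearMap.add_apply]
  linarith

lemma apply_self_le_of_sub_mem (hB : B.IsPosSemidef) {S : Submodule R M} {e d : M}
    (horth : ∀ s ∈ S, B e s = 0) (hd : d - e ∈ S) : B e e ≤ B d d := by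
  have hed : B e d = B e e := by
    simpa only [map_sub, sub_eq_zero] using horth _ hd
  linarith [hB.two_mul_apply_le e d]

lemma add_apply_sub_le_of_forall_add_apply_eq {A C : M →ₗ[R] M →ₗ[R] R}
    (hA : A.IsPosSemidef) (hC : C.IsPosSemidef) {u w : M}
    (hu : ∀ v, (A + C) u v = C w v) : (A + C) (u - w) (u - w) ≤ A w w := by
  have hp : A (u - w) (u - w) + C (u - w) (u - w) = -A w (u - w) := by
    rw [← LinearMap.add_apply, ← LinearMap.add_apply, LinearMap.map_sub₂, hu,
      LinearMap.add_apply, LinearMap.add_apply, map_sub, map_sub]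
    ring
  have hyoung : -(2 * A w (u - w)) ≤ A w w + A (u - w) (u - w) := by
    simpa only [map_neg, LinearMap.neg_apply, neg_neg, mul_neg]
      using hA.two_mul_apply_le (-w) (u - w)
  rw [LinearMap.add_apply, LinearMap.add_apply]
  linarith [hC.nonneg (u - w)]

end LinearMap.IsPosSemidef

theorem stmt_8_general
    {V H : Type*}
    [NormedAddCommGroup V] [InnerProductSpace ℝ V]
    [NormedAddCommGroup H] [InnerProductSpace ℝ H]
    (ι : V →L[ℝ] H)
    (a : V →L[ℝ] V →L[ℝ] ℝ)
    (hsym : ∀ u v : V, a u v = a v u)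
    (hpos : ∀ v : V, 0 ≤ a v v)
    (ubar : H) (uρ : V)
    (hsol : ∀ v : V, a uρ v + ⟪ι uρ, ι v⟫ = ⟪ubar, ι v⟫)
    (Vh : Submodule ℝ V)
    (uρh : V) (huρh : uρh ∈ Vh)
    (hGal : ∀ vh ∈ Vh, a uρh vh + ⟪ι uρh, ι vh⟫ = ⟪ubar, ι vh⟫)
    (wbar : V) (hreg : ubar = ι wbar) :
    ∀ vh ∈ Vh,
      ‖ι (uρ - uρh)‖ ^ 2 ≤
        2 * (2 * a wbar wbar + a (wbar - vh) (wbar - vh) +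
          ‖ι (wbar - vh)‖ ^ 2) := by
  intro vh hvh
  let A : V →ₗ[ℝ] V →ₗ[ℝ] ℝ := a.toLinearMap₁₂
  let C : V →ₗ[ℝ] V →ₗ[ℝ] ℝ := (innerₗ H).compl₁₂ (ι : V →ₗ[ℝ] H) ι
  have hA : A.IsPosSemidef := ⟨⟨hsym⟩, ⟨hpos⟩⟩
  have hC : C.IsPosSemidef := isPosSemidef_inner.compl₁₂_self _
  have hC_apply (x : V) : C x x = ‖ι x‖ ^ 2 := real_inner_self_eq_norm_sq (ι x)
  have hsol' (v : V) : (A + C) uρ v = C wbar v := by simpa [A, C, hreg] using hsol v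
  have hGal' (s : V) (hs : s ∈ Vh) : (A + C) uρh s = C wbar s := by
    simpa [A, C, hreg] using hGal s hs
  have horth (s : V) (hs : s ∈ Vh) : (A + C) (uρ - uρh) s = 0 := by
    rw [LinearMap.map_sub₂, hsol', hGal' s hs, sub_self]
  have hmem : (uρ - vh) - (uρ - uρh) ∈ Vh := by simpa using sub_mem huρh hvh
  calc ‖ι (uρ - uρh)‖ ^ 2 = C (uρ - uρh) (uρ - uρh) := (hC_apply _).symm
    _ ≤ (A + C) (uρ - uρh) (uρ - uρh) := le_add_of_nonneg_left (hA.nonneg _)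
    _ ≤ (A + C) (uρ - vh) (uρ - vh) := (hA.add hC).apply_self_le_of_sub_mem horth hmem
    _ ≤ 2 * (A + C) (uρ - wbar) (uρ - wbar) + 2 * (A + C) (wbar - vh) (wbar - vh) := by
      simpa using (hA.add hC).apply_add_le (uρ - wbar) (wbar - vh)
    _ ≤ 2 * A wbar wbar + 2 * (A + C) (wbar - vh) (wbar - vh) := by
      gcongr
      exact hA.add_apply_sub_le_of_forall_add_apply_eq hC hsol'
    _ ≤ _ := by
      simp only [A, LinearMap.add_apply, ContinuousLinearMap.toLinearMap₁₂_apply_apply_apply,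
        hC_apply]
      linarith [hpos wbar]

/-- for the continuous solution `uρ`, a Galerkin solution
`uρh ∈ V_h`, and a regular target `ū = ι w̄`, the Galerkin error satisfies, for
every `v_h ∈ V_h`:
`‖ι(uρ − uρh)‖² ≤ 2[2‖w̄‖_a² + ‖w̄ − v_h‖_a² + ‖ι(w̄ − v_h)‖²]`. -/
theorem stmt_8
    {V H : Type*}
    [NormedAddCommGroup V] [InnerProductSpace ℝ V] [CompleteSpace V]
    [NormedAddCommGroup H] [InnerProductSpace ℝ H] [CompleteSpace H]
    (ι : V →L[ℝ] H) (hι : Function.Injective ι)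
    (a : V →L[ℝ] V →L[ℝ] ℝ)
    (hsym : ∀ u v : V, a u v = a v u)
    (hpos : ∀ v : V, 0 ≤ a v v)
    (ubar : H) (uρ : V)
    (hsol : ∀ v : V, a uρ v + ⟪ι uρ, ι v⟫ = ⟪ubar, ι v⟫)
    (Vh : Submodule ℝ V) (hVh : IsClosed (Vh : Set V))
    (uρh : V) (huρh : uρh ∈ Vh)
    (hGal : ∀ vh ∈ Vh, a uρh vh + ⟪ι uρh, ι vh⟫ = ⟪ubar, ι vh⟫)
    (wbar : V) (hreg : ubar = ι wbar) :
    ∀ vh ∈ Vh,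
      ‖ι (uρ - uρh)‖ ^ 2 ≤
        2 * (2 * a wbar wbar + a (wbar - vh) (wbar - vh) +
          ‖ι (wbar - vh)‖ ^ 2) :=
  stmt_8_general ι a hsym hpos ubar uρ hsol Vh uρh huρh hGal wbar hreg
end

section
/- (Stability of the perturbed Galerkin scheme.) Let a and ã be two continuous symmetric bilinear forms on V, with ã positive semidefinite. Let V_h ⊆ V be a closed subspace, ū ∈ H, and let u_{ρh}, ũ_{ρh} ∈ V_h satisfy a(u_{ρh}, v_h) + ⟨ι u_{ρh}, ι v_h⟩_H = ⟨ū, ι v_h⟩_H and ã(ũ_{ρh}, v_h) + ⟨ι ũ_{ρh}, ι v_h⟩_H = ⟨ū, ι v_h⟩_H for all v_h ∈ V_h. Then ‖ι(ũ_{ρh} − u_{ρh})‖_H² ≤ a(u_{ρh}, ũ_{ρh} − u_{ρh}) − ã(u_{ρh}, ũ_{ρh} − u_{ρh}). -/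
open scoped RealInnerProductSpace

/-! Testing both Galerkin equations with `e = ũ − u ∈ V_h` and subtracting gives
`‖ι e‖² = a(u, e) − ã(ũ, e)`, and `ã(ũ, e) = ã(u, e) + ã(e, e) ≥ ã(u, e)`. -/

section GalerkinPerturbation

variable {V H : Type*} [NormedAddCommGroup V] [InnerProductSpace ℝ V]
  [NormedAddCommGroup H] [InnerProductSpace ℝ H]

theorem ContinuousLinearMap.apply_sub_le_of_nonneg_self (b : V →L[ℝ] V →L[ℝ] ℝ)
    (hb : ∀ v, 0 ≤ b v v) (u w : V) : b u (w - u) ≤ b w (w - u) := by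
  have hsplit : b w (w - u) = b u (w - u) + b (w - u) (w - u) := by
    rw [← add_apply, ← map_add, add_sub_cancel]
  linarith [hb (w - u)]

theorem inner_sub_eq_of_galerkin (ι : V →L[ℝ] H) (a atil : V →L[ℝ] V →L[ℝ] ℝ)
    (Vh : Submodule ℝ V) (ubar : H) {u w : V}
    (hGal : ∀ vh ∈ Vh, a u vh + ⟪ι u, ι vh⟫ = ⟪ubar, ι vh⟫)
    (hGaltil : ∀ vh ∈ Vh, atil w vh + ⟪ι w, ι vh⟫ = ⟪ubar, ι vh⟫) {v : V} (hv : v ∈ Vh) :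
    ⟪ι (w - u), ι v⟫ = a u v - atil w v := by
  rw [map_sub, inner_sub_left]
  linarith [hGal v hv, hGaltil v hv]

end GalerkinPerturbation

theorem stmt_9_general
    {V H : Type*}
    [NormedAddCommGroup V] [InnerProductSpace ℝ V]
    [NormedAddCommGroup H] [InnerProductSpace ℝ H]
    (ι : V →L[ℝ] H)
    (a atil : V →L[ℝ] V →L[ℝ] ℝ)
    (hatilpos : ∀ v : V, 0 ≤ atil v v)
    (Vh : Submodule ℝ V)
    (ubar : H)
    (uρh : V) (huρh : uρh ∈ Vh)
    (util : V) (hutil : util ∈ Vh)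
    (hGal : ∀ vh ∈ Vh, a uρh vh + ⟪ι uρh, ι vh⟫ = ⟪ubar, ι vh⟫)
    (hGaltil : ∀ vh ∈ Vh, atil util vh + ⟪ι util, ι vh⟫ = ⟪ubar, ι vh⟫) :
    ‖ι (util - uρh)‖ ^ 2 ≤
      a uρh (util - uρh) - atil uρh (util - uρh) := by
  rw [← real_inner_self_eq_norm_sq,
    inner_sub_eq_of_galerkin ι a atil Vh ubar hGal hGaltil (Vh.sub_mem hutil huρh)]
  linarith [atil.apply_sub_le_of_nonneg_self hatilpos uρh util]

/-- Stability of the perturbed Galerkin scheme: if `uρh` is the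
Galerkin solution for the exact bilinear form `a` and `ũρh` the Galerkin
solution for the perturbed (positive semidefinite) bilinear form `ã`, both in
the closed subspace `V_h`, then
`‖ι(ũρh − uρh)‖² ≤ a(uρh, ũρh − uρh) − ã(uρh, ũρh − uρh)`. -/
theorem stmt_9
    {V H : Type*}
    [NormedAddCommGroup V] [InnerProductSpace ℝ V] [CompleteSpace V]
    [NormedAddCommGroup H] [InnerProductSpace ℝ H] [CompleteSpace H]
    (ι : V →L[ℝ] H) (hι : Function.Injective ι)
    (a atil : V →L[ℝ] V →L[ℝ] ℝ)
    (hasym : ∀ u v : V, a u v = a v u)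
    (hatilsym : ∀ u v : V, atil u v = atil v u)
    (hatilpos : ∀ v : V, 0 ≤ atil v v)
    (Vh : Submodule ℝ V) (hVh : IsClosed (Vh : Set V))
    (ubar : H)
    (uρh : V) (huρh : uρh ∈ Vh)
    (util : V) (hutil : util ∈ Vh)
    (hGal : ∀ vh ∈ Vh, a uρh vh + ⟪ι uρh, ι vh⟫ = ⟪ubar, ι vh⟫)
    (hGaltil : ∀ vh ∈ Vh, atil util vh + ⟪ι util, ι vh⟫ = ⟪ubar, ι vh⟫) :
    ‖ι (util - uρh)‖ ^ 2 ≤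
      a uρh (util - uρh) - atil uρh (util - uρh) :=
  stmt_9_general ι a atil hatilpos Vh ubar uρh huρh util hutil hGal hGaltil
end

section
/- Let W be a real Hilbert space and T : W → W a bounded self-adjoint linear operator that is positive (⟨Tw, w⟩ ≥ 0 for all w) and boundedly invertible. Let V ⊆ W be a subspace, u ∈ W, and p ∈ V satisfy the variational identity ⟨T p, v⟩ = ⟨u, v⟩ for all v ∈ V. Then ⟨T p, p⟩ ≤ ⟨T⁻¹ u, u⟩. -/
open scoped RealInnerProductSpace

/-!
With `q = T⁻¹ u`, self-adjointness and the variational identity give `⟨T p, q⟩ = ⟨u, p⟩ = ⟨T p, p⟩`,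
so positivity of `T` on `q - p` reads `0 ≤ ⟨T q, q⟩ - 2 ⟨T p, p⟩ + ⟨T p, p⟩ = ⟨T⁻¹ u, u⟩ - ⟨T p, p⟩`.
-/

open RCLike in
theorem LinearMap.IsPositive.two_mul_re_inner_sub_re_inner_le {𝕜 E : Type*} [RCLike 𝕜]
    [NormedAddCommGroup E] [InnerProductSpace 𝕜 E] {T : E →ₗ[𝕜] E} (hT : T.IsPositive)
    (p q : E) : 2 * re (inner 𝕜 (T p) q) - re (inner 𝕜 (T p) p) ≤ re (inner 𝕜 (T q) q) := by
  have hpos := hT.re_inner_nonneg_left (q - p)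
  have hsymm : re (inner 𝕜 (T q) p) = re (inner 𝕜 (T p) q) := by
    rw [hT.isSymmetric q p, inner_re_symm]
  rw [map_sub, inner_sub_left, inner_sub_right, inner_sub_right] at hpos
  simp only [map_sub] at hpos
  linarith

theorem stmt_10_general
    {W : Type*} [NormedAddCommGroup W] [InnerProductSpace ℝ W]
    (T : W ≃L[ℝ] W)
    (hself : ∀ x y : W, ⟪T x, y⟫ = ⟪x, T y⟫)
    (hpos : ∀ w : W, 0 ≤ ⟪T w, w⟫)
    (Vs : Submodule ℝ W)
    (u : W) (p : W) (hp : p ∈ Vs)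
    (hvar : ∀ v ∈ Vs, ⟪T p, v⟫ = ⟪u, v⟫) :
    ⟪T p, p⟫ ≤ ⟪T.symm u, u⟫ := by
  have hT : (T : W →ₗ[ℝ] W).IsPositive := (LinearMap.isPositive_iff _).2 ⟨hself, hpos⟩
  have key : 2 * ⟪T p, T.symm u⟫ - ⟪T p, p⟫ ≤ ⟪T (T.symm u), T.symm u⟫ :=
    hT.two_mul_re_inner_sub_re_inner_le p (T.symm u)
  have hcross : ⟪T p, T.symm u⟫ = ⟪T p, p⟫ := by
    rw [hself, T.apply_symm_apply, real_inner_comm, hvar p hp]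
  rw [hcross, T.apply_symm_apply, real_inner_comm (T.symm u)] at key
  linarith

/-- let `T : W → W` be a bounded, self-adjoint, positive and
boundedly invertible linear operator on a real Hilbert space `W` (formalized as
a continuous linear equivalence, so that `T⁻¹ = T.symm` is bounded as well).
If `p` lies in a subspace `V ⊆ W` and satisfies `⟨T p, v⟩ = ⟨u, v⟩` for all
`v ∈ V`, then `⟨T p, p⟩ ≤ ⟨T⁻¹ u, u⟩`. -/
theorem stmt_10
    {W : Type*} [NormedAddCommGroup W] [InnerProductSpace ℝ W] [CompleteSpace W]
    (T : W ≃L[ℝ] W)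
    (hself : ∀ x y : W, ⟪T x, y⟫ = ⟪x, T y⟫)
    (hpos : ∀ w : W, 0 ≤ ⟪T w, w⟫)
    (Vs : Submodule ℝ W)
    (u : W) (p : W) (hp : p ∈ Vs)
    (hvar : ∀ v ∈ Vs, ⟪T p, v⟫ = ⟪u, v⟫) :
    ⟪T p, p⟫ ≤ ⟪T.symm u, u⟫ :=
  stmt_10_general T hself hpos Vs u p hp hvar
end

section
/- (Positivity of the Bramble–Pasciak transformed system matrix.) Let K_ρ, C, M be symmetric positive definite real N×N matrices and K a symmetric real N×N matrix, and assume that K_ρ − C is positive definite. Then the block matrix 𝒦 = [[(K_ρ − C) C⁻¹ K_ρ, (K_ρ − C) C⁻¹ K], [K C⁻¹ (K_ρ − C), K C⁻¹ K + M]] (of size 2N × 2N) is symmetric positive definite. -/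
/-!
Writing `D = K_ρ - C`, so that `K_ρ = C + D`, the block matrix splits as
`diag(D, M) + [D; K] C⁻¹ [D; K]ᵀ`: a positive definite block-diagonal matrix plus a
congruence transform of the positive definite `C⁻¹`, which is positive semidefinite.
-/

open Matrix

variable {m n R : Type*} [Fintype m] [Fintype n]

theorem Matrix.PosDef.fromBlocks_zero [CommRing R] [PartialOrder R] [StarRing R]
    [IsOrderedRing R] {A : Matrix m m R} {D : Matrix n n R} (hA : A.PosDef) (hD : D.PosDef) :
    (fromBlocks A 0 0 D).PosDef := by
  refine .of_dotProduct_mulVec_pos (isHermitian_fromBlocks_iff.2 ⟨hA.1, by simp, by simp, hD.1⟩)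
    fun x hx => ?_
  have hquad : star x ⬝ᵥ (fromBlocks A 0 0 D *ᵥ x) =
      star (x ∘ Sum.inl) ⬝ᵥ (A *ᵥ (x ∘ Sum.inl)) + star (x ∘ Sum.inr) ⬝ᵥ (D *ᵥ (x ∘ Sum.inr)) := by
    simp [fromBlocks_mulVec, dotProduct, Fintype.sum_sum_type]
  rw [hquad]
  by_cases hl : x ∘ Sum.inl = 0
  · have hr : x ∘ Sum.inr ≠ 0 := fun hr => hx <| by
      rw [← Sum.elim_comp_inl_inr x, hl, hr]; ext (i | i) <;> rfl
    simpa [hl] using hD.dotProduct_mulVec_pos hr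
  · exact add_pos_of_pos_of_nonneg (hA.dotProduct_mulVec_pos hl)
      (hD.posSemidef.dotProduct_mulVec_nonneg _)

theorem Matrix.fromBlocks_eq_fromBlocks_zero_add_fromRows_mul_mul_fromCols [CommRing R]
    [DecidableEq n] {C : Matrix n n R} (hC : IsUnit C.det) (Kρ M K : Matrix n n R) :
    fromBlocks ((Kρ - C) * C⁻¹ * Kρ) ((Kρ - C) * C⁻¹ * K)
        (K * C⁻¹ * (Kρ - C)) (K * C⁻¹ * K + M) =
      fromBlocks (Kρ - C) 0 0 M + fromRows (Kρ - C) K * C⁻¹ * fromCols (Kρ - C) K := by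
  have hKρ : (Kρ - C) * C⁻¹ * Kρ = (Kρ - C) + (Kρ - C) * C⁻¹ * (Kρ - C) := by
    rw [mul_sub ((Kρ - C) * C⁻¹) Kρ C, nonsing_inv_mul_cancel_right _ _ hC]
    abel
  rw [fromRows_mul, fromRows_mul_fromCols, fromBlocks_add, hKρ, zero_add, zero_add, add_comm M]

theorem stmt_15_general
    (N : ℕ) (Kρ C M K : Matrix (Fin N) (Fin N) ℝ)
    (hC : C.PosDef) (hM : M.PosDef) (hK : K.IsSymm)
    (hKρC : (Kρ - C).PosDef) :
    (Matrix.fromBlocks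
      ((Kρ - C) * C⁻¹ * Kρ) ((Kρ - C) * C⁻¹ * K)
      (K * C⁻¹ * (Kρ - C)) (K * C⁻¹ * K + M)).PosDef := by
  have hCdet : IsUnit C.det := (isUnit_iff_isUnit_det C).1 hC.isUnit
  have hcols : fromCols (Kρ - C) K = (fromRows (Kρ - C) K)ᴴ := by
    rw [conjTranspose_fromRows_eq_fromCols_conjTranspose, hKρC.1.eq,
      (isHermitian_iff_isSymm.2 hK).eq]
  rw [fromBlocks_eq_fromBlocks_zero_add_fromRows_mul_mul_fromCols hCdet, hcols]
  exact (hKρC.fromBlocks_zero hM).add_posSemidef (hC.inv.posSemidef.mul_mul_conjTranspose_same _)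

/-- Positivity of the Bramble–Pasciak transformed system matrix:
if `K_ρ`, `C`, `M` are symmetric positive definite real `N×N` matrices, `K` is
symmetric, and `K_ρ − C` is positive definite, then the `2N×2N` block matrix
`𝒦 = [[(K_ρ−C)C⁻¹K_ρ, (K_ρ−C)C⁻¹K], [KC⁻¹(K_ρ−C), KC⁻¹K + M]]` is symmetric
positive definite. -/
theorem stmt_15
    (N : ℕ) (Kρ C M K : Matrix (Fin N) (Fin N) ℝ)
    (hKρ : Kρ.PosDef) (hC : C.PosDef) (hM : M.PosDef) (hK : K.IsSymm)
    (hKρC : (Kρ - C).PosDef) :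
    (Matrix.fromBlocks
      ((Kρ - C) * C⁻¹ * Kρ) ((Kρ - C) * C⁻¹ * K)
      (K * C⁻¹ * (Kρ - C)) (K * C⁻¹ * K + M)).PosDef :=
  stmt_15_general N Kρ C M K hC hM hK hKρC
end
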